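/- A numerical semigroup S has α-rectangular Apéry set if and only if S is symmetric and every element of Ap(S,m) has a unique representation as a nonnegative integer combination of the minimal generators. -/

import Mathlib

/-- A numerical semigroup: a subset of ℕ containing 0, closed under addition,
with finite complement. -/
structure NumSgp where
  carrier : Set ℕ
  zero_mem : 0 ∈ carrier
  add_mem : ∀ a ∈ carrier, ∀ b ∈ carrier, a + b ∈ carrier
  cofinite : Set.Finite carrierᶜ

namespace NumSgp

/-- The multiplicity: the smallest positive element. -/
noncomputable def mult (S : NumSgp) : ℕ := sInf {s | s ∈ S.carrier ∧ s ≠ 0}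

/-- The Apéry set of `S` with respect to `n`: elements `s ∈ S` with `s - n ∉ S`. -/
def Apery (S : NumSgp) (n : ℕ) : Set ℕ :=
  {s | s ∈ S.carrier ∧ ¬ ∃ t ∈ S.carrier, s = t + n}

/-- `s ⪯ t` : there is `u ∈ S` with `t = s + u`. -/
def sle (S : NumSgp) (s t : ℕ) : Prop := ∃ u ∈ S.carrier, t = s + u

/-- Membership for integers. -/
def memZ (S : NumSgp) (x : ℤ) : Prop := ∃ n ∈ S.carrier, (n : ℤ) = x

/-- `f` is the Frobenius number of `S`: the largest integer not in `S`. -/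
def IsFrob (S : NumSgp) (f : ℤ) : Prop := ¬ S.memZ f ∧ ∀ x : ℤ, f < x → S.memZ x

/-- `S` is symmetric: `x ∈ S ↔ f - x ∉ S` for all integers `x`. -/
def Symm (S : NumSgp) : Prop :=
  ∃ f : ℤ, S.IsFrob f ∧ ∀ x : ℤ, S.memZ x ↔ ¬ S.memZ (f - x)

/-- `s` is a minimal generator (irreducible element) of `S`. -/
def IsMinGen (S : NumSgp) (s : ℕ) : Prop :=
  s ∈ S.carrier ∧ s ≠ 0 ∧
    ¬ ∃ a ∈ S.carrier, ∃ b ∈ S.carrier, a ≠ 0 ∧ b ≠ 0 ∧ s = a + b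

/-- `g : Fin ν → ℕ` enumerates the minimal generators in increasing order. -/
def MinGens (S : NumSgp) {ν : ℕ} (g : Fin ν → ℕ) : Prop :=
  StrictMono g ∧ Set.range g = {s | S.IsMinGen s}

/-- The order of `s`: the maximal total coefficient sum over representations of `s`
in terms of the generators `g`. -/
noncomputable def ord {ν : ℕ} (g : Fin ν → ℕ) (s : ℕ) : ℕ :=
  sSup {k | ∃ lam : Fin ν → ℕ, s = ∑ i, lam i * g i ∧ k = ∑ i, lam i}

/-- `s` has a unique representation in terms of the generators `g`. -/
def UniqueRep {ν : ℕ} (g : Fin ν → ℕ) (s : ℕ) : Prop :=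
  ∃! lam : Fin ν → ℕ, s = ∑ i, lam i * g i

/-- `s` has a unique maximal representation in terms of the generators `g`. -/
def UniqueMaxRep {ν : ℕ} (g : Fin ν → ℕ) (s : ℕ) : Prop :=
  ∃! lam : Fin ν → ℕ, s = ∑ i, lam i * g i ∧ ∑ i, lam i = ord g s

/-- The submonoid of ℕ generated by the generators `g j` with `j < i`. -/
def genBy {ν : ℕ} (g : Fin ν → ℕ) (i : Fin ν) : Set ℕ :=
  {s | ∃ lam : Fin ν → ℕ, (∀ j, ¬ j < i → lam j = 0) ∧ s = ∑ j, lam j * g j}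

/-- `τ_i = min {h | h·g_i ∈ ⟨g_1, …, g_{i-1}⟩} - 1`. -/
noncomputable def tau {ν : ℕ} (g : Fin ν → ℕ) (i : Fin ν) : ℕ :=
  sInf {h | h * g i ∈ genBy g i} - 1

/-- `α_i = max {h | h·g_i ∈ Ap(S, m)}`. -/
noncomputable def alpha (S : NumSgp) {ν : ℕ} (g : Fin ν → ℕ) (i : Fin ν) : ℕ :=
  sSup {h | h * g i ∈ S.Apery S.mult}

/-- `β_i = max {h | h·g_i ∈ Ap(S, m) and ord(h·g_i) = h}`. -/
noncomputable def beta (S : NumSgp) {ν : ℕ} (g : Fin ν → ℕ) (i : Fin ν) : ℕ :=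
  sSup {h | h * g i ∈ S.Apery S.mult ∧ ord g (h * g i) = h}

/-- `γ_i`. -/
noncomputable def gamma (S : NumSgp) {ν : ℕ} (g : Fin ν → ℕ) (i : Fin ν) : ℕ :=
  sSup {h | h * g i ∈ S.Apery S.mult ∧ ord g (h * g i) = h ∧ UniqueMaxRep g (h * g i)}

/-- The "rectangle" `{Σ_{i ≥ 2} λ_i g_i | 0 ≤ λ_i ≤ c_i}` (indices here start at 0,
the first generator does not appear). -/
def rect {ν : ℕ} (g c : Fin ν → ℕ) : Set ℕ :=
  {s | ∃ lam : Fin ν → ℕ, (∀ i, i.val = 0 → lam i = 0) ∧ (∀ i, lam i ≤ c i) ∧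
    s = ∑ i, lam i * g i}

/-- `Π_{i ≥ 2} (c_i + 1)` (the first index excluded). -/
def piProd {ν : ℕ} (c : Fin ν → ℕ) : ℕ :=
  ∏ i ∈ Finset.univ.filter (fun i : Fin ν => i.val ≠ 0), (c i + 1)

/-- `S` is telescopic. -/
def Telescopic (S : NumSgp) : Prop :=
  ∃ (ν : ℕ) (g : Fin ν → ℕ), S.MinGens g ∧ S.Apery S.mult = rect g (tau g)

/-- `S` has α-rectangular Apéry set. -/
def AlphaRect (S : NumSgp) : Prop :=
  ∃ (ν : ℕ) (g : Fin ν → ℕ), S.MinGens g ∧ S.Apery S.mult = rect g (S.alpha g)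

/-- `S` has γ-rectangular Apéry set. -/
def GammaRect (S : NumSgp) : Prop :=
  ∃ (ν : ℕ) (g : Fin ν → ℕ), S.MinGens g ∧ S.Apery S.mult = rect g (S.gamma g)

/-- `S` is associated to a plane branch: telescopic and `(τ_i+1) g_i < g_{i+1}`. -/
def PlaneBranch (S : NumSgp) : Prop :=
  ∃ (ν : ℕ) (g : Fin ν → ℕ), S.MinGens g ∧ S.Apery S.mult = rect g (tau g) ∧
    ∀ i : Fin ν, 1 ≤ i.val → ∀ h : i.val + 1 < ν, (tau g i + 1) * g i < g ⟨i.val + 1, h⟩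

/-- `S` is free: for some rearrangement `n` of the minimal generators,
`Ap(S, n_1) = {Σ_{i ≥ 2} λ_i n_i | 0 ≤ λ_i ≤ φ_i}`. -/
def Free (S : NumSgp) : Prop :=
  ∃ (ν : ℕ) (hν : 0 < ν) (n : Fin ν → ℕ), Function.Injective n ∧
    Set.range n = {s | S.IsMinGen s} ∧ S.Apery (n ⟨0, hν⟩) = rect n (tau n)

/-- The kernel congruence of the factorization map `λ ↦ Σ λ_i g_i`. -/
def kerCon {ν : ℕ} (g : Fin ν → ℕ) : AddCon (Fin ν → ℕ) where
  r a b := ∑ i, a i * g i = ∑ i, b i * g i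
  iseqv := ⟨fun _ => rfl, Eq.symm, Eq.trans⟩
  add' := by
    intro a b c d h1 h2
    simp only [Pi.add_apply, add_mul, Finset.sum_add_distrib]
    exact congrArg₂ (· + ·) h1 h2

/-- `S` is a complete intersection: it admits a presentation of cardinality `ν - 1`
(the cardinality of any minimal presentation equals `ν - 1`). -/
def CompleteIntersection (S : NumSgp) : Prop :=
  ∃ (ν : ℕ) (g : Fin ν → ℕ), S.MinGens g ∧
    ∃ ρ : Finset ((Fin ν → ℕ) × (Fin ν → ℕ)), ρ.card = ν - 1 ∧
      addConGen (fun a b => (a, b) ∈ ρ) = kerCon g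

end NumSgp

open NumSgp

/-!
Write `M` for the largest element of `Ap(S,m)`. Since `Ap(S,m)` is closed under taking
summands inside `S`, every representation `Σ λᵢ gᵢ` of an element of `Ap(S,m)` satisfies
`λ ≤ α`, so `Ap(S,m) ⊆ rect g α`, and equality holds exactly when `M = Σ αᵢ gᵢ`: then every
element of the rectangle is a summand of `M`. Since `M - m` is the Frobenius number,
symmetry means `w ↦ M - w` maps `Ap(S,m)` to itself.

If `M = Σ αᵢ gᵢ`, the complement `Σ (αᵢ - λᵢ) gᵢ` lies in the rectangle, which gives symmetry;
and adding it to any representation `μ` of `x` gives a representation `μ + α - λ` of `M`, which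
is again `≤ α`, so `μ ≤ λ`: representations are unique. Conversely, under symmetry
`M - αᵢ gᵢ ∈ Ap(S,m)`, so `M` has a representation with `i`-th coefficient at least `αᵢ`; by
uniqueness this is the representation of `M`, whose coefficients are `≤ α`, hence `M = Σ αᵢ gᵢ`.
-/

namespace NumSgp

variable (S : NumSgp)

lemma exists_forall_ge_mem : ∃ N, ∀ k, N ≤ k → k ∈ S.carrier := by
  obtain ⟨b, hb⟩ := S.cofinite.bddAbove
  exact ⟨b + 1, fun k hk => by_contra fun h => absurd (hb h) (by omega)⟩

lemma mul_mem {a : ℕ} (ha : a ∈ S.carrier) (k : ℕ) : k * a ∈ S.carrier := by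
  induction k with
  | zero => simpa using S.zero_mem
  | succ k ih => rw [Nat.succ_mul]; exact S.add_mem _ ih _ ha

lemma memZ_natCast_iff {k : ℕ} : S.memZ k ↔ k ∈ S.carrier := by
  refine ⟨?_, fun h => ⟨k, h, rfl⟩⟩
  rintro ⟨m, hm, h⟩
  rwa [← Nat.cast_inj.mp h]

lemma memZ_add {x y : ℤ} (hx : S.memZ x) (hy : S.memZ y) : S.memZ (x + y) := by
  obtain ⟨a, ha, rfl⟩ := hx
  obtain ⟨b, hb, rfl⟩ := hy
  exact ⟨a + b, S.add_mem _ ha _ hb, by push_cast; rfl⟩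

lemma mult_mem : S.mult ∈ S.carrier ∧ S.mult ≠ 0 := by
  obtain ⟨N, hN⟩ := S.exists_forall_ge_mem
  exact Nat.sInf_mem (s := {s | s ∈ S.carrier ∧ s ≠ 0}) ⟨N + 1, hN _ (by omega), by omega⟩

lemma mult_le {s : ℕ} (hs : s ∈ S.carrier) (hs0 : s ≠ 0) : S.mult ≤ s :=
  Nat.sInf_le ⟨hs, hs0⟩

lemma isMinGen_mult : S.IsMinGen S.mult := by
  refine ⟨S.mult_mem.1, S.mult_mem.2, ?_⟩
  rintro ⟨a, ha, b, hb, ha0, hb0, hab⟩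
  have := S.mult_le ha ha0
  have := S.mult_le hb hb0
  omega

section Apery

variable {S} {n : ℕ}

lemma IsFrob.unique {f f' : ℤ} (hf : S.IsFrob f) (hf' : S.IsFrob f') : f = f' := by
  by_contra hne
  rcases lt_or_gt_of_ne hne with h | h
  · exact hf'.1 (hf.2 _ h)
  · exact hf.1 (hf'.2 _ h)

lemma mem_apery_of_add_mem_apery {a b : ℕ} (ha : a ∈ S.carrier) (hb : b ∈ S.carrier)
    (hab : a + b ∈ S.Apery n) : a ∈ S.Apery n :=
  ⟨ha, fun ⟨t, ht, h⟩ => hab.2 ⟨t + b, S.add_mem _ ht _ hb, by omega⟩⟩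

lemma zero_mem_apery (hn : n ≠ 0) : 0 ∈ S.Apery n :=
  ⟨S.zero_mem, fun ⟨_, _, h⟩ => by omega⟩

lemma bddAbove_apery : BddAbove (S.Apery n) := by
  obtain ⟨N, hN⟩ := S.exists_forall_ge_mem
  refine ⟨N + n, fun x hx => ?_⟩
  by_contra h
  exact hx.2 ⟨x - n, hN _ (by omega), by omega⟩

lemma le_sSup_apery {x : ℕ} (hx : x ∈ S.Apery n) : x ≤ sSup (S.Apery n) :=
  le_csSup bddAbove_apery hx

lemma sSup_apery_mem (hn : n ≠ 0) : sSup (S.Apery n) ∈ S.Apery n :=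
  Nat.sSup_mem ⟨0, zero_mem_apery hn⟩ bddAbove_apery

lemma exists_add_mul_mem_apery (hn : n ≠ 0) {x : ℕ} (hx : x ∉ S.carrier) :
    ∃ k, x + (k + 1) * n ∈ S.Apery n := by
  classical
  obtain ⟨N, hN⟩ := S.exists_forall_ge_mem
  have hex : ∃ k, x + (k + 1) * n ∈ S.carrier :=
    ⟨N, hN _ (by nlinarith [Nat.one_le_iff_ne_zero.mpr hn])⟩
  refine ⟨Nat.find hex, Nat.find_spec hex, fun ⟨t, ht, h⟩ => ?_⟩
  rcases hk : Nat.find hex with _ | k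
  · rw [hk, zero_add, one_mul, add_left_inj] at h
    exact hx (h ▸ ht)
  · rw [hk, add_mul _ 1, one_mul, ← add_assoc, add_left_inj] at h
    exact Nat.find_min hex (m := k) (by omega) (h ▸ ht)

lemma add_le_sSup_apery_of_not_mem (hn : n ≠ 0) {x : ℕ} (hx : x ∉ S.carrier) :
    x + n ≤ sSup (S.Apery n) := by
  obtain ⟨k, hk⟩ := exists_add_mul_mem_apery hn hx
  have := le_sSup_apery hk
  nlinarith

lemma sub_one_le_sSup_apery (hn : n ≠ 0) : n - 1 ≤ sSup (S.Apery n) := by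
  by_cases h : n - 1 ∈ S.carrier
  · exact le_sSup_apery ⟨h, fun ⟨_, _, ht⟩ => by omega⟩
  · have := add_le_sSup_apery_of_not_mem hn h
    omega

theorem isFrob_sSup_apery_sub (hn : n ≠ 0) : S.IsFrob ((sSup (S.Apery n) : ℕ) - n) := by
  refine ⟨fun ⟨t, ht, h⟩ => (sSup_apery_mem hn).2 ⟨t, ht, by omega⟩, fun x hx => ?_⟩
  by_contra hxS
  have := sub_one_le_sSup_apery (S := S) hn
  lift x to ℕ using (by omega)
  have := add_le_sSup_apery_of_not_mem hn (S.memZ_natCast_iff.not.mp hxS)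
  omega

theorem symm_iff_sub_mem_apery (hn : n ∈ S.carrier) (hn0 : n ≠ 0) :
    S.Symm ↔ ∀ w ∈ S.Apery n, sSup (S.Apery n) - w ∈ S.Apery n := by
  set M := sSup (S.Apery n)
  have hfrob : S.IsFrob ((M : ℕ) - n) := isFrob_sSup_apery_sub hn0
  constructor
  · rintro ⟨f, hf, hsymm⟩ w hw
    obtain rfl := hf.unique hfrob
    have hwM : w ≤ M := le_sSup_apery hw
    have hsub : S.memZ ((M - w : ℕ) : ℤ) := by
      have : ¬ S.memZ ((w : ℤ) - n) := fun ⟨t, ht, h⟩ => hw.2 ⟨t, ht, by omega⟩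
      have := not_not.mp (mt (hsymm _).mpr this)
      rwa [show (M : ℤ) - n - (w - n) = ((M - w : ℕ) : ℤ) by omega] at this
    refine ⟨S.memZ_natCast_iff.mp hsub, fun ⟨t, ht, h⟩ => (hsymm w).mp ⟨w, hw.1, rfl⟩ ?_⟩
    exact ⟨t, ht, by omega⟩
  · intro hsub
    refine ⟨_, hfrob, fun x => ⟨fun hx hfx => hfrob.1 ?_, fun hfx => by_contra fun hx => ?_⟩⟩
    · simpa using S.memZ_add hx hfx
    · have hx0 : 0 ≤ x := by_contra fun h => hfx (hfrob.2 _ (by omega))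
      lift x to ℕ using hx0
      obtain ⟨k, hk⟩ := exists_add_mul_mem_apery hn0 (S.memZ_natCast_iff.not.mp hx)
      have hwM : x + (k + 1) * n ≤ M := le_sSup_apery hk
      refine hfx ⟨M - (x + (k + 1) * n) + k * n,
        S.add_mem _ (hsub _ hk).1 _ (S.mul_mem hn k), ?_⟩
      rw [Nat.cast_add, Nat.cast_sub hwM]
      push_cast
      ring

end Apery

section Generators

variable {S} {ν : ℕ} {g : Fin ν → ℕ}

lemma sum_add_mul (g a b : Fin ν → ℕ) :
    ∑ i, (a + b) i * g i = ∑ i, a i * g i + ∑ i, b i * g i := by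
  simp only [Pi.add_apply, add_mul, Finset.sum_add_distrib]

lemma sum_single_mul (g : Fin ν → ℕ) (j : Fin ν) (c : ℕ) :
    ∑ i, (Pi.single j c : Fin ν → ℕ) i * g i = c * g j := by
  simp [Pi.single_apply]

lemma MinGens.isMinGen (hg : S.MinGens g) (i : Fin ν) : S.IsMinGen (g i) := by
  have : g i ∈ {s | S.IsMinGen s} := hg.2 ▸ Set.mem_range_self i
  exact this

lemma MinGens.sum_mul_mem (hg : S.MinGens g) (c : Fin ν → ℕ) (s : Finset (Fin ν)) :
    ∑ i ∈ s, c i * g i ∈ S.carrier :=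
  Finset.sum_induction _ (· ∈ S.carrier) (fun a b ha hb => S.add_mem a ha b hb) S.zero_mem
    fun i _ => S.mul_mem (hg.isMinGen i).1 _

lemma MinGens.apply_eq_mult (hg : S.MinGens g) {i : Fin ν} (hi : i.val = 0) : g i = S.mult := by
  obtain ⟨j, hj⟩ : S.mult ∈ Set.range g := hg.2 ▸ S.isMinGen_mult
  have := hg.1.monotone (show i ≤ j by rw [Fin.le_def]; omega)
  have := S.mult_le (hg.isMinGen i).1 (hg.isMinGen i).2.1
  omega

lemma MinGens.exists_rep (hg : S.MinGens g) {x : ℕ} (hx : x ∈ S.carrier) :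
    ∃ c : Fin ν → ℕ, x = ∑ i, c i * g i := by
  induction x using Nat.strong_induction_on with
  | _ x ih =>
    by_cases hmin : S.IsMinGen x
    · obtain ⟨j, rfl⟩ : x ∈ Set.range g := hg.2 ▸ hmin
      exact ⟨Pi.single j 1, by rw [sum_single_mul, one_mul]⟩
    rcases Nat.eq_zero_or_pos x with rfl | hx0
    · exact ⟨0, by simp⟩
    obtain ⟨a, ha, b, hb, ha0, hb0, rfl⟩ : ∃ a ∈ S.carrier, ∃ b ∈ S.carrier,
        a ≠ 0 ∧ b ≠ 0 ∧ x = a + b := by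
      by_contra h
      exact hmin ⟨hx, hx0.ne', h⟩
    obtain ⟨ca, rfl⟩ := ih a (by omega) ha
    obtain ⟨cb, rfl⟩ := ih _ (by omega) hb
    exact ⟨ca + cb, (sum_add_mul g ca cb).symm⟩

lemma MinGens.bddAbove_mul_mem_apery (hg : S.MinGens g) (i : Fin ν) :
    BddAbove {k | k * g i ∈ S.Apery S.mult} :=
  ⟨sSup (S.Apery S.mult), fun k hk =>
    (Nat.le_mul_of_pos_right k (Nat.pos_of_ne_zero (hg.isMinGen i).2.1)).trans
      (le_sSup_apery hk)⟩

lemma MinGens.le_alpha (hg : S.MinGens g) {i : Fin ν} {k : ℕ}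
    (hk : k * g i ∈ S.Apery S.mult) : k ≤ S.alpha g i :=
  le_csSup (hg.bddAbove_mul_mem_apery i) hk

lemma MinGens.alpha_mul_mem_apery (hg : S.MinGens g) (i : Fin ν) :
    S.alpha g i * g i ∈ S.Apery S.mult :=
  Nat.sSup_mem ⟨0, by simpa using zero_mem_apery S.mult_mem.2⟩ (hg.bddAbove_mul_mem_apery i)

lemma MinGens.alpha_eq_zero (hg : S.MinGens g) {i : Fin ν} (hi : i.val = 0) :
    S.alpha g i = 0 := by
  have h := hg.alpha_mul_mem_apery i
  rw [hg.apply_eq_mult hi] at h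
  by_contra h0
  exact h.2 ⟨(S.alpha g i - 1) * S.mult, S.mul_mem S.mult_mem.1 _, by
    rw [← Nat.succ_mul, Nat.succ_eq_add_one, Nat.sub_add_cancel (Nat.one_le_iff_ne_zero.mpr h0)]⟩

lemma MinGens.le_alpha_of_rep (hg : S.MinGens g) {x : ℕ} (hx : x ∈ S.Apery S.mult)
    {c : Fin ν → ℕ} (hc : x = ∑ i, c i * g i) (i : Fin ν) : c i ≤ S.alpha g i := by
  rw [← Finset.add_sum_erase _ _ (Finset.mem_univ i)] at hc
  exact hg.le_alpha (mem_apery_of_add_mem_apery (S.mul_mem (hg.isMinGen i).1 _)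
    (hg.sum_mul_mem c _) (hc ▸ hx))

lemma MinGens.apery_subset_rect_alpha (hg : S.MinGens g) :
    S.Apery S.mult ⊆ rect g (S.alpha g) := fun x hx => by
  obtain ⟨c, hc⟩ := hg.exists_rep hx.1
  have hle := hg.le_alpha_of_rep hx hc
  exact ⟨c, fun i hi => by simpa [hg.alpha_eq_zero hi] using hle i, hle, hc⟩

lemma MinGens.sum_mul_mem_apery_of_le_alpha (hg : S.MinGens g)
    (hM : sSup (S.Apery S.mult) = ∑ i, S.alpha g i * g i) {c : Fin ν → ℕ}
    (hc : c ≤ S.alpha g) : ∑ i, c i * g i ∈ S.Apery S.mult := by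
  refine mem_apery_of_add_mem_apery (hg.sum_mul_mem c Finset.univ)
    (hg.sum_mul_mem (S.alpha g - c) Finset.univ) ?_
  rw [← sum_add_mul, add_tsub_cancel_of_le hc, ← hM]
  exact sSup_apery_mem S.mult_mem.2

theorem MinGens.apery_eq_rect_alpha_iff (hg : S.MinGens g) :
    S.Apery S.mult = rect g (S.alpha g) ↔ sSup (S.Apery S.mult) = ∑ i, S.alpha g i * g i := by
  refine ⟨fun h => le_antisymm ?_ (le_sSup_apery ?_), fun hM => ?_⟩
  · refine csSup_le ⟨0, zero_mem_apery S.mult_mem.2⟩ fun w hw => ?_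
    obtain ⟨c, -, hc, rfl⟩ := h ▸ hw
    exact Finset.sum_le_sum fun i _ => Nat.mul_le_mul_right _ (hc i)
  · exact h ▸ ⟨S.alpha g, fun i => hg.alpha_eq_zero, fun _ => le_rfl, rfl⟩
  · refine hg.apery_subset_rect_alpha.antisymm ?_
    rintro _ ⟨c, -, hc, rfl⟩
    exact hg.sum_mul_mem_apery_of_le_alpha hM hc

lemma MinGens.sub_mem_apery_of_sSup_eq (hg : S.MinGens g)
    (hM : sSup (S.Apery S.mult) = ∑ i, S.alpha g i * g i) :
    ∀ w ∈ S.Apery S.mult, sSup (S.Apery S.mult) - w ∈ S.Apery S.mult := by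
  intro w hw
  obtain ⟨c, hc⟩ := hg.exists_rep hw.1
  have hle : c ≤ S.alpha g := hg.le_alpha_of_rep hw hc
  have hsum := sum_add_mul g c (S.alpha g - c)
  rw [add_tsub_cancel_of_le hle, ← hM, ← hc] at hsum
  rw [hsum, add_tsub_cancel_left]
  exact hg.sum_mul_mem_apery_of_le_alpha hM tsub_le_self

lemma MinGens.uniqueRep_of_sSup_eq (hg : S.MinGens g)
    (hM : sSup (S.Apery S.mult) = ∑ i, S.alpha g i * g i) {x : ℕ}
    (hx : x ∈ S.Apery S.mult) : UniqueRep g x := by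
  have hle : ∀ a b : Fin ν → ℕ, x = ∑ i, a i * g i → x = ∑ i, b i * g i →
      ∀ i, a i ≤ b i := by
    intro a b ha hb i
    have hb_le : b ≤ S.alpha g := hg.le_alpha_of_rep hx hb
    have hrep : sSup (S.Apery S.mult) = ∑ j, (a + (S.alpha g - b)) j * g j := by
      rw [sum_add_mul, ← ha, hb, ← sum_add_mul, add_tsub_cancel_of_le hb_le, hM]
    have hrep_le : a i + (S.alpha g i - b i) ≤ S.alpha g i :=
      hg.le_alpha_of_rep (sSup_apery_mem S.mult_mem.2) hrep i
    have hbi : b i ≤ S.alpha g i := hb_le i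
    omega
  obtain ⟨a, ha⟩ := hg.exists_rep hx.1
  exact ⟨a, ha, fun b hb => funext fun i => le_antisymm (hle b a hb ha i) (hle a b ha hb i)⟩

lemma MinGens.sSup_eq_of_sub_mem_apery (hg : S.MinGens g)
    (hsub : ∀ w ∈ S.Apery S.mult, sSup (S.Apery S.mult) - w ∈ S.Apery S.mult)
    (hu : UniqueRep g (sSup (S.Apery S.mult))) :
    sSup (S.Apery S.mult) = ∑ i, S.alpha g i * g i := by
  obtain ⟨μ, hμ, huniq⟩ := hu
  suffices μ = S.alpha g by rw [hμ, this]
  funext i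
  have hα := hg.alpha_mul_mem_apery i
  obtain ⟨ρ, hρ⟩ := hg.exists_rep (hsub _ hα).1
  have hrep : sSup (S.Apery S.mult) =
      ∑ j, (ρ + Pi.single i (S.alpha g i) : Fin ν → ℕ) j * g j := by
    rw [sum_add_mul, sum_single_mul, ← hρ, Nat.sub_add_cancel (le_sSup_apery hα)]
  have hμi : ρ i + S.alpha g i = μ i := by simpa using congrFun (huniq _ hrep) i
  have hμ_le := hg.le_alpha_of_rep (sSup_apery_mem S.mult_mem.2) hμ i
  omega

end Generators

end NumSgp

/-- `Ap(S, m)` is α-rectangular iff `S` is symmetric and every element of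
`Ap(S, m)` has a unique representation. -/
theorem stmt_6 (S : NumSgp) (ν : ℕ) (g : Fin ν → ℕ) (hg : S.MinGens g) :
    S.Apery S.mult = rect g (S.alpha g) ↔
      (S.Symm ∧ ∀ x ∈ S.Apery S.mult, UniqueRep g x) := by
  rw [hg.apery_eq_rect_alpha_iff, symm_iff_sub_mem_apery S.mult_mem.1 S.mult_mem.2]
  exact ⟨fun hM => ⟨hg.sub_mem_apery_of_sSup_eq hM, fun _ => hg.uniqueRep_of_sSup_eq hM⟩,
    fun ⟨hsub, hu⟩ => hg.sSup_eq_of_sub_mem_apery hsub (hu _ (sSup_apery_mem S.mult_mem.2))⟩
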